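/- Let V, Q be Hilbert spaces with a well-posed mixed problem as above, and let V_h ⊆ V, Q_h ⊆ Q be closed subspaces such that the restricted problem is also well-posed, with discrete kernel K_h = {v_h ∈ V_h : b(v_h,q_h)=0 ∀q_h ∈ Q_h}. If K_h ⊆ K (the continuous kernel), then the discrete solution u_h satisfies the pressure-robust estimate ‖u_h‖_V ≤ (1/α₀)‖f‖_{K'} + (1/β_h)(1 + ‖a‖/α₀)‖g‖_{Q_h'}; in particular, if f = b(·,q) for some q ∈ Q and g = 0, then u_h = 0. -/
import Mathlib


open Set

/-- Dual (semi) norm of a functional `f : V → ℝ`, tested only on the subset `U`. -/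
noncomputable def dualSemiNorm {V : Type*} [NormedAddCommGroup V] (U : Set V) (f : V → ℝ) : ℝ :=
  sSup ((fun v => |f v| / ‖v‖) '' (U \ {0}))

lemma dualSemiNorm_nonneg {V : Type*} [NormedAddCommGroup V] (U : Set V) (f : V → ℝ) :
    0 ≤ dualSemiNorm U f := by
  apply Real.sSup_nonneg
  rintro x ⟨v, -, rfl⟩
  exact div_nonneg (abs_nonneg _) (norm_nonneg _)

lemma dualSemiNorm_zero {V : Type*} [NormedAddCommGroup V] (U : Set V) (f : V → ℝ)
    (hf : ∀ v ∈ U, f v = 0) : dualSemiNorm U f = 0 := by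
  refine le_antisymm (Real.sSup_nonpos ?_) (dualSemiNorm_nonneg U f)
  rintro x ⟨v, ⟨hv, -⟩, rfl⟩
  simp [hf v hv]

lemma abs_le_dualSemiNorm {V : Type*} [NormedAddCommGroup V] [NormedSpace ℝ V]
    (U : Set V) (f : V →L[ℝ] ℝ) {v : V} (hv : v ∈ U) (hv0 : v ≠ 0) :
    |f v| ≤ dualSemiNorm U (fun x => f x) * ‖v‖ := by
  have hvn : (0:ℝ) < ‖v‖ := norm_pos_iff.mpr hv0
  have hmem : |f v| / ‖v‖ ∈ (fun x => |f x| / ‖x‖) '' (U \ {0}) :=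
    ⟨v, ⟨hv, hv0⟩, rfl⟩
  have hbdd : BddAbove ((fun x => |f x| / ‖x‖) '' (U \ {0})) := by
    refine ⟨‖f‖, ?_⟩
    rintro x ⟨w, -, rfl⟩
    rcases eq_or_ne w 0 with rfl | hw
    · simp [norm_nonneg]
    · rw [div_le_iff₀ (norm_pos_iff.mpr hw)]
      calc |f w| = ‖f w‖ := rfl
        _ ≤ ‖f‖ * ‖w‖ := f.le_opNorm w
  have := le_csSup hbdd hmem
  calc |f v| = |f v| / ‖v‖ * ‖v‖ := by field_simp
    _ ≤ dualSemiNorm U (fun x => f x) * ‖v‖ := by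
        exact mul_le_mul_of_nonneg_right this (norm_nonneg _)

/-- Pressure-robust discrete stability estimate: for a conforming Galerkin
discretization with discrete kernel `K_h ⊆ K`, the discrete velocity satisfies
`‖u_h‖ ≤ (1/α₀)‖f‖_{K'} + (1/β_h)(1 + ‖a‖/α₀)‖g‖_{Q_h'}`; in particular, if
`f = b(·,q)` for some `q ∈ Q` and `g = 0`, then `u_h = 0`. -/
theorem stmt19
    {V Q : Type*} [NormedAddCommGroup V] [InnerProductSpace ℝ V] [CompleteSpace V]
    [NormedAddCommGroup Q] [InnerProductSpace ℝ Q] [CompleteSpace Q]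
    (a : V →L[ℝ] V →L[ℝ] ℝ) (b : V →L[ℝ] Q →L[ℝ] ℝ)
    (K : Set V) (hK : K = {v : V | ∀ q : Q, b v q = 0})
    (α₀ : ℝ) (hα₀ : 0 < α₀) (hcoerK : ∀ v ∈ K, a v v ≥ α₀ * ‖v‖ ^ 2)
    (Vh : Submodule ℝ V) (hVh : IsClosed (Vh : Set V))
    (Qh : Submodule ℝ Q) (hQh : IsClosed (Qh : Set Q))
    (Kh : Set V) (hKh : Kh = {vh : V | vh ∈ Vh ∧ ∀ qh ∈ Qh, b vh qh = 0})
    (hKhK : Kh ⊆ K)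
    (βh : ℝ) (hβh : 0 < βh)
    (hdiscInfSup : ∀ g : Q →L[ℝ] ℝ, ∃ vh ∈ Vh,
      (∀ qh ∈ Qh, b vh qh = g qh) ∧ ‖vh‖ ≤ (1 / βh) * dualSemiNorm (Qh : Set Q) (fun q => g q))
    (f : V →L[ℝ] ℝ) (g : Q →L[ℝ] ℝ)
    (uh : V) (ph : Q) (huh : uh ∈ Vh) (hph : ph ∈ Qh)
    (hsol1 : ∀ vh ∈ Vh, a uh vh + b vh ph = f vh)
    (hsol2 : ∀ qh ∈ Qh, b uh qh = g qh) :
    ‖uh‖ ≤ (1 / α₀) * dualSemiNorm K (fun v => f v)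
        + (1 / βh) * (1 + ‖a‖ / α₀) * dualSemiNorm (Qh : Set Q) (fun q => g q)
    ∧ ((∃ q : Q, ∀ v : V, f v = b v q) → g = 0 → uh = 0) := by
  obtain ⟨vh, hvhVh, hvhb, hvhn⟩ := hdiscInfSup g
  set w := uh - vh with hw
  have hwVh : w ∈ Vh := Vh.sub_mem huh hvhVh
  have hwKh : w ∈ Kh := by
    rw [hKh]
    refine ⟨hwVh, fun qh hqh => ?_⟩
    simp [hw, map_sub, hsol2 qh hqh, hvhb qh hqh]
  have hwK : w ∈ K := hKhK hwKh
  have hbwph : b w ph = 0 := by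
    have := hK ▸ hwK
    exact this ph
  have hcoer : α₀ * ‖w‖ ^ 2 ≤ a w w := hcoerK w hwK
  have haw : a w w = f w - b w ph - a vh w := by
    have h1 : a uh w + b w ph = f w := hsol1 w hwVh
    have : a w w = a uh w - a vh w := by simp [hw, map_sub]; ring
    linarith
  set DK := dualSemiNorm K (fun v => f v) with hDK
  have hDKnn : 0 ≤ DK := dualSemiNorm_nonneg _ _
  have hann : (0:ℝ) ≤ ‖a‖ := a.opNorm_nonneg
  have hfw : |f w| ≤ DK * ‖w‖ := by
    rcases eq_or_ne w 0 with h0 | h0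
    · simp [h0]
    · exact abs_le_dualSemiNorm K f hwK h0
  have havw : |a vh w| ≤ ‖a‖ * ‖vh‖ * ‖w‖ := by
    calc |a vh w| = ‖a vh w‖ := rfl
      _ ≤ ‖a vh‖ * ‖w‖ := (a vh).le_opNorm w
      _ ≤ ‖a‖ * ‖vh‖ * ‖w‖ :=
          mul_le_mul_of_nonneg_right (a.le_opNorm vh) (norm_nonneg _)
  have hkey : α₀ * ‖w‖ ^ 2 ≤ (DK + ‖a‖ * ‖vh‖) * ‖w‖ := by
    have h1 : a w w ≤ |f w| + |a vh w| := by
      rw [haw, hbwph]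
      have := abs_sub_abs_le_abs_sub (f w - 0) (a vh w)
      calc f w - 0 - a vh w ≤ |f w - 0 - a vh w| := le_abs_self _
        _ ≤ |f w - 0| + |a vh w| := abs_sub _ _
        _ = |f w| + |a vh w| := by ring_nf
    nlinarith
  have hwle : ‖w‖ ≤ (1 / α₀) * DK + (‖a‖ / α₀) * ‖vh‖ := by
    rcases eq_or_ne w 0 with h0 | h0
    · have : (0:ℝ) ≤ (1 / α₀) * DK + (‖a‖ / α₀) * ‖vh‖ := by positivity
      simpa [h0] using this
    · have hwn : (0:ℝ) < ‖w‖ := norm_pos_iff.mpr h0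
      have : α₀ * ‖w‖ ≤ DK + ‖a‖ * ‖vh‖ := by
        have := hkey
        nlinarith
      rw [div_mul_eq_mul_div, div_mul_eq_mul_div, one_mul, ← add_div,
        le_div_iff₀ hα₀]
      linarith [mul_comm α₀ ‖w‖]
  have hmain : ‖uh‖ ≤ (1 / α₀) * DK
      + (1 / βh) * (1 + ‖a‖ / α₀) * dualSemiNorm (Qh : Set Q) (fun q => g q) := by
    have htri : ‖uh‖ ≤ ‖w‖ + ‖vh‖ := by
      calc ‖uh‖ = ‖w + vh‖ := by simp [hw]
        _ ≤ ‖w‖ + ‖vh‖ := norm_add_le _ _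
    have h2 : ‖uh‖ ≤ (1 / α₀) * DK + (1 + ‖a‖ / α₀) * ‖vh‖ := by
      have := hwle
      nlinarith [norm_nonneg vh]
    have hfac : (0:ℝ) ≤ 1 + ‖a‖ / α₀ := by positivity
    calc ‖uh‖ ≤ (1 / α₀) * DK + (1 + ‖a‖ / α₀) * ‖vh‖ := h2
      _ ≤ (1 / α₀) * DK + (1 + ‖a‖ / α₀) *
            ((1 / βh) * dualSemiNorm (Qh : Set Q) (fun q => g q)) :=
          by gcongr
      _ = (1 / α₀) * DK + (1 / βh) * (1 + ‖a‖ / α₀) *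
            dualSemiNorm (Qh : Set Q) (fun q => g q) := by ring
  refine ⟨hmain, ?_⟩
  rintro ⟨q, hq⟩ rfl
  have hDK0 : DK = 0 := by
    apply dualSemiNorm_zero
    intro v hv
    have hv' : ∀ q' : Q, b v q' = 0 := by rw [hK] at hv; exact hv
    rw [hq v, hv' q]
  have hg0 : dualSemiNorm (Qh : Set Q) (fun q => (0 : Q →L[ℝ] ℝ) q) = 0 := by
    apply dualSemiNorm_zero
    intro v hv
    simp
  have : ‖uh‖ ≤ 0 := by
    have := hmain
    rw [hDK0, hg0] at this
    simpa using this
  exact norm_le_zero_iff.mp this
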